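/- For every positive integer k and every real x > k - 1, the reciprocal of the falling factorial x(x-1)⋯(x-k+1) admits the integral representation Γ(k)/(x(x-1)⋯(x-k+1)) = ∫₀^∞ (e^y - 1)^{k-1} e^{-yx} dy. -/

import Mathlib

open MeasureTheory Real Set Finset

/-! Substituting `t = e^{-y}` turns the integral into the Beta integral
`∫₀¹ t^{x-k} (1-t)^{k-1} dt = B(x-k+1, k)`, and for an integer second argument
`B(a, n+1) = n! / (a(a+1)⋯(a+n))`; with `a = x - k + 1` the denominator is the falling factorial
`x(x-1)⋯(x-k+1)` read backwards. -/

theorem prod_range_succ_sub_natCast {R : Type*} [CommRing R] (x : R) (n : ℕ) :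
    ∏ i ∈ range (n + 1), (x - i) = ∏ j ∈ range (n + 1), (x - n + j) := by
  rw [← prod_range_reflect]
  refine prod_congr rfl fun j hj => ?_
  rw [Nat.add_sub_cancel, Nat.cast_sub (Nat.le_of_lt_succ (mem_range.mp hj))]
  ring

theorem integral_Ioo_zero_one_rpow_mul_one_sub_pow {a : ℝ} (ha : 0 < a) (n : ℕ) :
    ∫ t in Ioo (0 : ℝ) 1, t ^ (a - 1) * (1 - t) ^ n =
      n.factorial / ∏ j ∈ range (n + 1), (a + j) := by
  have hbeta := Complex.betaIntegral_eval_nat_add_one_right (u := a) (by simpa) n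
  rw [Complex.betaIntegral, intervalIntegral.integral_of_le zero_le_one,
    integral_Ioc_eq_integral_Ioo,
    setIntegral_congr_fun measurableSet_Ioo
      (g := fun t : ℝ => ((t ^ (a - 1) * (1 - t) ^ n : ℝ) : ℂ))
      fun t ht => by simp [Complex.ofReal_cpow ht.1.le], integral_complex_ofReal] at hbeta
  exact_mod_cast hbeta

theorem integral_comp_exp_Iio {E : Type*} [NormedAddCommGroup E] [NormedSpace ℝ E]
    (g : ℝ → E) (a : ℝ) :
    ∫ x in Iio a, exp x • g (exp x) = ∫ y in Ioo 0 (exp a), g y := by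
  symm; rw [← image_exp_Iio]
  simpa [abs_of_pos (exp_pos _)] using integral_image_eq_integral_abs_deriv_smul
      (measurableSet_Iio (a := a)) (fun x _ ↦ (hasDerivAt_exp x).hasDerivWithinAt)
      (fun x _ y _ hxy ↦ exp_injective hxy) g

theorem integral_Ioo_zero_one_eq_integral_comp_exp_neg {E : Type*} [NormedAddCommGroup E]
    [NormedSpace ℝ E] (g : ℝ → E) :
    ∫ t in Ioo (0 : ℝ) 1, g t = ∫ y in Ioi 0, exp (-y) • g (exp (-y)) := by
  rw [integral_comp_neg_Ioi (f := fun y => exp y • g (exp y)), neg_zero,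
    integral_Iic_eq_integral_Iio, integral_comp_exp_Iio, exp_zero]

theorem exp_neg_mul_exp_neg_rpow_mul_one_sub_pow (x y : ℝ) (n : ℕ) :
    exp (-y) * (exp (-y) ^ (x - n - 1) * (1 - exp (-y)) ^ n) = (exp y - 1) ^ n * exp (-y * x) := by
  have hfactor : exp y - 1 = exp y * (1 - exp (-y)) := by
    rw [mul_sub, ← exp_add]; simp
  have hexp : exp (-y) * exp (-y * (x - n - 1)) = exp (n * y) * exp (-y * x) := by
    rw [← exp_add, ← exp_add]; ring_nf
  rw [hfactor, mul_pow, ← exp_nat_mul, ← exp_mul]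
  linear_combination (1 - exp (-y)) ^ n * hexp

/-- Beta-integral representation of the reciprocal falling factorial:
for a positive integer `k` and real `x > k - 1`,
`Γ(k) / (x(x-1)⋯(x-k+1)) = ∫₀^∞ (e^y - 1)^(k-1) e^{-yx} dy`,
where `Γ(k) = (k-1)!`. -/
theorem stmt0 (k : ℕ) (hk : 1 ≤ k) (x : ℝ) (hx : (k : ℝ) - 1 < x) :
    ((k - 1).factorial : ℝ) / (∏ i ∈ Finset.range k, (x - (i : ℝ))) =
      ∫ y in Set.Ioi (0 : ℝ), (Real.exp y - 1) ^ (k - 1) * Real.exp (-y * x) := by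
  obtain ⟨n, rfl⟩ : ∃ n, k = n + 1 := ⟨k - 1, by omega⟩
  have ha : 0 < x - n := by push_cast at hx; linarith
  rw [Nat.add_sub_cancel, prod_range_succ_sub_natCast,
    ← integral_Ioo_zero_one_rpow_mul_one_sub_pow ha, integral_Ioo_zero_one_eq_integral_comp_exp_neg]
  exact setIntegral_congr_fun measurableSet_Ioi fun y _ =>
    exp_neg_mul_exp_neg_rpow_mul_one_sub_pow x y n
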